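/- Let Λ be a finite alphabet, x : ℕ → Λ, and n ∈ ℕ. Suppose m := min{k ≥ 1 : x|_1^{n-k} = x|_{k+1}^n} satisfies m < n/2. Then for every 1 ≤ k ≤ n-m, one has x|_1^{n-k} = x|_{k+1}^n if and only if m divides k. -/

import Mathlib

/-!
Multiples of a period are periods, and if `p ≤ q` are periods of a word of length `n` with
`p + q ≤ n`, then so is `q - p`; running Euclid's algorithm, `gcd p q` is a period (the weak
Fine–Wilf theorem). For a period `k ≤ n - m`, `gcd m k` is therefore a positive period at most
`m`, hence equal to `m` by minimality, i.e. `m ∣ k`.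
-/

def HasPeriod {Λ : Type*} (x : ℕ → Λ) (n k : ℕ) : Prop :=
  ∀ i, 1 ≤ i → i ≤ n - k → x i = x (k + i)

namespace HasPeriod

variable {Λ : Type*} {x : ℕ → Λ} {n p q : ℕ}

theorem of_le (h : n ≤ p) : HasPeriod x n p := fun _ _ hi => by omega

theorem mul (hp : HasPeriod x n p) (j : ℕ) : HasPeriod x n (p * j) := by
  induction j with
  | zero => intro i _ _; simp
  | succ j ih =>
    intro i hi1 hi2
    calc x i = x (p * j + i) := ih i hi1 (by grind)
      _ = x (p + (p * j + i)) := hp (p * j + i) (by omega) (by grind)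
      _ = x (p * (j + 1) + i) := by congr 1; ring

theorem sub (hp : HasPeriod x n p) (hq : HasPeriod x n q) (hpq : p ≤ q) (hsum : p + q ≤ n) :
    HasPeriod x n (q - p) := by
  intro i hi1 hi2
  by_cases h : p < i
  · calc x i = x (p + (i - p)) := by rw [Nat.add_sub_cancel' h.le]
      _ = x (i - p) := (hp (i - p) (by omega) (by omega)).symm
      _ = x (q + (i - p)) := hq (i - p) (by omega) (by omega)
      _ = x (q - p + i) := by congr 1; omega
  · calc x i = x (q + i) := hq i hi1 (by omega)
      _ = x (p + (q - p + i)) := by congr 1; omega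
      _ = x (q - p + i) := (hp (q - p + i) (by omega) (by omega)).symm

theorem gcd (hp : HasPeriod x n p) (hq : HasPeriod x n q) (hsum : p + q ≤ n) :
    HasPeriod x n (p.gcd q) := by
  induction h : p + q using Nat.strong_induction_on generalizing p q with
  | _ s ih =>
    subst h
    rcases Nat.eq_zero_or_pos p with rfl | hp0
    · simpa using hq
    rcases Nat.eq_zero_or_pos q with rfl | hq0
    · simpa using hp
    rcases le_total p q with hle | hle
    · rw [← Nat.gcd_sub_self_right hle]
      exact ih _ (by omega) hp (hp.sub hq hle (by omega)) (by omega) rfl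
    · rw [← Nat.gcd_sub_self_left hle]
      exact ih _ (by omega) (hq.sub hp hle (by omega)) hq (by omega) rfl

end HasPeriod

theorem stmt_4_general (Λ : Type*) (x : ℕ → Λ) (n : ℕ)
    (m : ℕ)
    (hm : m = sInf {k : ℕ | 1 ≤ k ∧ ∀ i, 1 ≤ i → i ≤ n - k → x i = x (k + i)}) :
    ∀ k, 1 ≤ k → k ≤ n - m →
      ((∀ i, 1 ≤ i → i ≤ n - k → x i = x (k + i)) ↔ m ∣ k) := by
  change m = sInf {k | 1 ≤ k ∧ HasPeriod x n k} at hm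
  -- every shift `k ≥ n` is vacuously a period, so the infimum is attained
  have hne : {k | 1 ≤ k ∧ HasPeriod x n k}.Nonempty := ⟨n + 1, by omega, .of_le (by omega)⟩
  obtain ⟨hm1, hmPer⟩ : 1 ≤ m ∧ HasPeriod x n m := hm ▸ Nat.sInf_mem hne
  intro k hk1 hkn
  refine ⟨fun hkPer => ?_, fun ⟨j, hj⟩ => hj ▸ hmPer.mul j⟩
  have hgcd : HasPeriod x n (m.gcd k) := hmPer.gcd hkPer (by omega)
  have hle : m ≤ m.gcd k := hm.trans_le <| Nat.sInf_le ⟨Nat.gcd_pos_of_pos_left k hm1, hgcd⟩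
  exact le_antisymm (Nat.gcd_le_left k hm1) hle ▸ Nat.gcd_dvd_right m k

/-- with `m := min {k ≥ 1 : x|_1^{n-k} = x|_{k+1}^n}` and `m < n/2`,
for every `1 ≤ k ≤ n - m` one has `x|_1^{n-k} = x|_{k+1}^n` if and only if `m ∣ k`. -/
theorem stmt_4 (Λ : Type*) [Fintype Λ] (x : ℕ → Λ) (n : ℕ)
    (m : ℕ)
    (hm : m = sInf {k : ℕ | 1 ≤ k ∧ ∀ i, 1 ≤ i → i ≤ n - k → x i = x (k + i)})
    (hhalf : (m : ℝ) < n / 2) :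
    ∀ k, 1 ≤ k → k ≤ n - m →
      ((∀ i, 1 ≤ i → i ≤ n - k → x i = x (k + i)) ↔ m ∣ k) :=
  stmt_4_general Λ x n m hm
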